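/- In any game where both players have maxmin payoff equal to 1 and the payoff matrix is: u(x,x)=(1,1), u(x,y)=(1,0), u(x,z)=(1,3), u(y,x)=(0,1), u(y,y)=(2,2), u(y,z)=(0,1), u(z,x)=(3,1), u(z,y)=(1,0), u(z,z)=(0,0), there is no safe reaction-function equilibrium. -/

import Mathlib

/-- A reaction function for player `i` must not depend on `i`'s own coordinate:
it is a function of the actions `a_{-i}` of the other players. -/
def IndepOf {ι : Type*} {A : ι → Type*} (i : ι) (f : (∀ j, A j) → A i) : Prop :=
  ∀ a b : ∀ j, A j, (∀ j, j ≠ i → a j = b j) → f a = f b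

/-- The set of fixed points (executable outcomes) of a profile of reaction functions. -/
def FixedPts {ι : Type*} {A : ι → Type*} (R : ∀ i, (∀ j, A j) → A i) : Set (∀ j, A j) :=
  {a | ∀ i, R i a = a i}

/-- Extended payoff of a reaction-function profile: the supremum (= maximum, in a
finite game) of `u i` over the fixed points, and `⊥ = -∞` when there is none. -/
noncomputable def Upay {ι : Type*} {A : ι → Type*}
    (u : ∀ i : ι, (∀ j, A j) → ℝ) (R : ∀ i, (∀ j, A j) → A i) (i : ι) : EReal :=
  sSup ((fun a => ((u i a : ℝ) : EReal)) '' FixedPts R)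

/-- A profile is unambiguous if some fixed point weakly Pareto-dominates all fixed points. -/
def Unambiguous {ι : Type*} {A : ι → Type*}
    (u : ∀ i : ι, (∀ j, A j) → ℝ) (R : ∀ i, (∀ j, A j) → A i) : Prop :=
  ∃ a ∈ FixedPts R, ∀ a' ∈ FixedPts R, ∀ i, u i a' ≤ u i a

/-- Reaction-function equilibrium: an unambiguous profile with no profitable
unilateral deviation through any reaction function. -/
def IsRFE {ι : Type*} [DecidableEq ι] {A : ι → Type*}
    (u : ∀ i : ι, (∀ j, A j) → ℝ) (R : ∀ i, (∀ j, A j) → A i) : Prop :=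
  Unambiguous u R ∧
    ∀ (i : ι) (R' : (∀ j, A j) → A i), IndepOf i R' →
      Upay u (Function.update R i R') i ≤ Upay u R i

/-- Outcome `a` is supported in reaction-function equilibrium. -/
def SupportedOutcome {ι : Type*} [DecidableEq ι] {A : ι → Type*}
    (u : ∀ i : ι, (∀ j, A j) → ℝ) (a : ∀ j, A j) : Prop :=
  ∃ R : ∀ i, (∀ j, A j) → A i, (∀ i, IndepOf i (R i)) ∧ IsRFE u R ∧
    a ∈ FixedPts R ∧ ∀ a' ∈ FixedPts R, ∀ i, u i a' ≤ u i a

/-- Player `i`'s maxmin payoff. -/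
noncomputable def maxmin {ι : Type*} [DecidableEq ι] {A : ι → Type*}
    [∀ j, Fintype (A j)] [∀ j, Nonempty (A j)]
    (u : ∀ i : ι, (∀ j, A j) → ℝ) (i : ι) : ℝ :=
  ⨆ x : A i, ⨅ a : ∀ j, A j, u i (Function.update a i x)

/-- A reaction function is safe if it guarantees at least the maxmin payoff. -/
def SafeRF {ι : Type*} [DecidableEq ι] {A : ι → Type*}
    [∀ j, Fintype (A j)] [∀ j, Nonempty (A j)]
    (u : ∀ i : ι, (∀ j, A j) → ℝ) (i : ι) (r : (∀ j, A j) → A i) : Prop :=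
  ∀ a : ∀ j, A j, maxmin u i ≤ u i (Function.update a i (r a))

/-!
Safety pins down the reply to `z`: the only action earning at least the maxmin payoff `1`
against `z` is `x`. Hence if player `i` deviates to the constant reaction `z`, the other
player answers `x`, and `(z, x)` is an executable outcome worth `3` to `i`. In an equilibrium
the Pareto-dominant fixed point must therefore give each player at least `3`, but no cell of
the game pays `3` to both players.
-/

section ReactionFunctions

variable {ι : Type*} {A : ι → Type*} {u : ∀ i : ι, (∀ j, A j) → ℝ}
  {R : ∀ i, (∀ j, A j) → A i} {i : ι}

theorem indepOf_const (i : ι) (c : A i) : IndepOf i (fun _ : ∀ j, A j => c) :=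
  fun _ _ _ => rfl

theorem mem_fixedPts_update_const [DecidableEq ι] {c : A i} {b : ∀ j, A j}
    (hbi : b i = c) (hb : ∀ j, j ≠ i → R j b = b j) :
    b ∈ FixedPts (Function.update R i fun _ => c) := by
  intro j
  by_cases hj : j = i
  · subst hj
    simp [hbi]
  · simp [Function.update_of_ne hj, hb j hj]

theorem coe_le_upay {a : ∀ j, A j} (ha : a ∈ FixedPts R) : ((u i a : ℝ) : EReal) ≤ Upay u R i :=
  le_sSup ⟨a, ha, rfl⟩

theorem upay_le {c : ℝ} (h : ∀ a ∈ FixedPts R, u i a ≤ c) : Upay u R i ≤ c :=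
  sSup_le <| by
    rintro _ ⟨a, ha, rfl⟩
    exact EReal.coe_le_coe_iff.mpr (h a ha)

theorem IsRFE.le_of_mem_fixedPts_update [DecidableEq ι] (hR : IsRFE u R) {a b : ∀ j, A j}
    (ha : ∀ a' ∈ FixedPts R, u i a' ≤ u i a) {R' : (∀ j, A j) → A i} (hR' : IndepOf i R')
    (hb : b ∈ FixedPts (Function.update R i R')) : u i b ≤ u i a :=
  EReal.coe_le_coe_iff.mp ((coe_le_upay hb).trans ((hR.2 i R' hR').trans (upay_le ha)))

end ReactionFunctions

theorem Fin.one_sub_ne_self (i : Fin 2) : 1 - i ≠ i := by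
  revert i
  decide

theorem Fin.one_sub_eq_of_ne {i j : Fin 2} (h : j ≠ i) : 1 - j = i := by
  revert i j
  decide

theorem SafeRF.maxmin_le_apply {m : ℕ} {M : Fin m → Fin m → ℝ} [NeZero m]
    {u : ∀ _ : Fin 2, (Fin 2 → Fin m) → ℝ} (hu : ∀ i a, u i a = M (a i) (a (1 - i)))
    {i : Fin 2} {r : (Fin 2 → Fin m) → Fin m} (hr : SafeRF u i r) (a : Fin 2 → Fin m) :
    maxmin u i ≤ M (r a) (a (1 - i)) := by
  have h := hr a
  rwa [hu, Function.update_self, Function.update_of_ne (Fin.one_sub_ne_self i)] at h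

/-- Own action (row) against the opponent's action (column); `x, y, z` are `0, 1, 2`. -/
abbrev payoff : Fin 3 → Fin 3 → ℝ := ![![(1 : ℝ), 1, 1], ![0, 2, 0], ![3, 1, 0]]

theorem eq_zero_of_one_le_payoff_two {r : Fin 3} (h : 1 ≤ payoff r 2) : r = 0 := by
  contrapose! h
  fin_cases r <;> simp_all [Matrix.cons_val]

theorem payoff_two_zero : payoff 2 0 = 3 := by
  simp [Matrix.cons_val]

theorem not_three_le_payoff_and_swap (p q : Fin 3) : ¬ (3 ≤ payoff p q ∧ 3 ≤ payoff q p) := by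
  fin_cases p <;> fin_cases q <;> norm_num [Matrix.cons_val]

theorem SafeRF.eq_zero_of_apply_one_sub_eq_two {u : ∀ _ : Fin 2, (Fin 2 → Fin 3) → ℝ}
    (hu : ∀ i a, u i a = payoff (a i) (a (1 - i))) (hmm : ∀ i, maxmin u i = 1) {i : Fin 2}
    {r : (Fin 2 → Fin 3) → Fin 3} (hr : SafeRF u i r) {a : Fin 2 → Fin 3} (ha : a (1 - i) = 2) :
    r a = 0 := by
  have h := hr.maxmin_le_apply hu a
  rw [hmm, ha] at h
  exact eq_zero_of_one_le_payoff_two h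

/-- the concrete symmetric 3×3 game (actions x=0, y=1, z=2) with
payoff matrix rows (1,1,1), (0,2,0), (3,1,0) from each player's own perspective
(both players have maxmin payoff 1) admits no safe reaction-function equilibrium. -/
theorem stmt10 (u : ∀ _ : Fin 2, (Fin 2 → Fin 3) → ℝ)
    (hu : ∀ (i : Fin 2) (a : Fin 2 → Fin 3),
      u i a = ![![(1 : ℝ), 1, 1], ![0, 2, 0], ![3, 1, 0]] (a i) (a (1 - i)))
    (hmm : ∀ i, maxmin u i = 1) :
    ¬ ∃ R : ∀ _ : Fin 2, (Fin 2 → Fin 3) → Fin 3,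
      (∀ i, IndepOf i (R i)) ∧ (∀ i, SafeRF u i (R i)) ∧ IsRFE u R := by
  rintro ⟨R, -, hSafe, hR⟩
  obtain ⟨a, -, ha⟩ := hR.1
  have hreply : ∀ j b, b (1 - j) = 2 → R j b = 0 := fun j _ hb =>
    (hSafe j).eq_zero_of_apply_one_sub_eq_two hu hmm hb
  have hthree : ∀ i, 3 ≤ u i a := by
    intro i
    have hb : Pi.single i 2 ∈ FixedPts (Function.update R i fun _ => 2) :=
      mem_fixedPts_update_const (Pi.single_eq_same i 2) fun j hj => by
        rw [hreply j _ (by rw [Fin.one_sub_eq_of_ne hj, Pi.single_eq_same]), Pi.single_eq_of_ne hj]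
    calc (3 : ℝ) = payoff 2 0 := payoff_two_zero.symm
      _ = u i (Pi.single i 2) := by
          rw [hu, Pi.single_eq_same, Pi.single_eq_of_ne (Fin.one_sub_ne_self i)]
      _ ≤ u i a := hR.le_of_mem_fixedPts_update (fun a' h => ha a' h i) (indepOf_const i 2) hb
  exact not_three_le_payoff_and_swap (a 0) (a 1)
    ⟨by simpa [hu] using hthree 0, by simpa [hu] using hthree 1⟩
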